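/- The pair ((U, q̄), i), with U := Â/R, q̄ := q̂ + R, i(x) := x̂ + R, is the enveloping^{⟨4-th⟩} algebra of the Leibniz algebra L: i is a Leibniz algebra homomorphism into (U,q̄) equipped with the bracket ⟨a,b⟩_{4,k} = ab − ba + bq̄a − abq̄ + kaq̄b − kq̄ab, and for any invariant algebra (A,q) and Leibniz homomorphism f : L → Leib((A,q),⟨·,·⟩_{4,k}) there exists a unique invariant homomorphism f' with f = f' ∘ i. -/

import Mathlib

/-!
Maps out of `Â` and `U = Â/R` are determined by the images of `q̂` and of the `x̂_j`, so
uniqueness is immediate and only existence needs an argument. To lift `x_j ↦ f(x_j)`,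
`q̃ ↦ q` from the tensor algebra to `Â`, the relation `q̃ a q̃ = q̃ a` must hold in `A` for every
`a`, while it is only given for `a = f x`: but for idempotent `q` the elements with
`q a q = q a` form a subalgebra, which therefore contains everything the generators generate.
The relations `R` then hold in `A` because `f` is a Leibniz homomorphism.
-/

noncomputable section

/-- The free `K`-vector space on `X ⊕ {q̃}`. -/
abbrev FreeInvModule (K : Type*) [Field K] (X : Type*) : Type _ := (X ⊕ Unit) →₀ K

/-- The generator `q̃` inside the tensor algebra `T(V)`. -/
def qTilde (K : Type*) [Field K] (X : Type*) : TensorAlgebra K (FreeInvModule K X) :=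
  TensorAlgebra.ι K (Finsupp.single (Sum.inr ()) 1)

/-- The relations generating the ideal `I`: `q̃⊗q̃ = q̃` and `q̃⊗a⊗q̃ = q̃⊗a` for all `a`. -/
inductive InvRel (K : Type*) [Field K] (X : Type*) :
    TensorAlgebra K (FreeInvModule K X) → TensorAlgebra K (FreeInvModule K X) → Prop
  | idem : InvRel K X (qTilde K X * qTilde K X) (qTilde K X)
  | inv (a : TensorAlgebra K (FreeInvModule K X)) :
      InvRel K X (qTilde K X * a * qTilde K X) (qTilde K X * a)

/-- The free invariant algebra `Â = T(V)/I`. -/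
abbrev FreeInvAlg (K : Type*) [Field K] (X : Type*) : Type _ := RingQuot (InvRel K X)

/-- `q̂ = q̃ + I`. -/
def qHat (K : Type*) [Field K] (X : Type*) : FreeInvAlg K X :=
  RingQuot.mkAlgHom K (InvRel K X) (qTilde K X)

variable (K : Type*) [Field K]

/-- The linear embedding `L → Â` extending `î` on the basis `X = {x_j}`. -/
def lHat (J : Type*) (L : Type*) [AddCommGroup L] [Module K L] (b : Module.Basis J K L) :
    L →ₗ[K] FreeInvAlg K J :=
  (RingQuot.mkAlgHom K (InvRel K J)).toLinearMap ∘ₗ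
    (TensorAlgebra.ι K (M := FreeInvModule K J)) ∘ₗ
      (Finsupp.lmapDomain K K Sum.inl) ∘ₗ b.repr.toLinearMap


/-- The relations generating the ideal `R` for a right Leibniz algebra `(L, ⟨·,·⟩)`:
`⟨x,y⟩^ = x̂ŷ - ŷx̂ + ŷq̂x̂ - x̂ŷq̂ + k x̂q̂ŷ - k q̂ŷx̂` for all `x, y ∈ L`. -/
inductive LeibRel (J : Type*) (L : Type*) [AddCommGroup L] [Module K L]
    (br : L →ₗ[K] L →ₗ[K] L) (b : Module.Basis J K L) (c : K) :
    FreeInvAlg K J → FreeInvAlg K J → Prop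
  | rel (x y : L) : LeibRel J L br b c (lHat K J L b (br x y))
      (lHat K J L b x * lHat K J L b y - lHat K J L b y * lHat K J L b x
        + lHat K J L b y * qHat K J * lHat K J L b x
        - lHat K J L b x * lHat K J L b y * qHat K J
        + c • (lHat K J L b x * qHat K J * lHat K J L b y)
        - c • (qHat K J * lHat K J L b y * lHat K J L b x))

/-- The enveloping^⟨4-th⟩ algebra `U = Â/R` of a Leibniz algebra. -/
abbrev EnvLeib (J : Type*) (L : Type*) [AddCommGroup L] [Module K L]
    (br : L →ₗ[K] L →ₗ[K] L) (b : Module.Basis J K L) (c : K) : Type _ :=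
  RingQuot (LeibRel K J L br b c)

/-- `q̄ = q̂ + R`. -/
def qBarLeib (J : Type*) (L : Type*) [AddCommGroup L] [Module K L]
    (br : L →ₗ[K] L →ₗ[K] L) (b : Module.Basis J K L) (c : K) : EnvLeib K J L br b c :=
  RingQuot.mkAlgHom K (LeibRel K J L br b c) (qHat K J)

/-- The canonical linear map `i : L → U`, `i(x) = x̂ + R`. -/
def iLeib (J : Type*) (L : Type*) [AddCommGroup L] [Module K L]
    (br : L →ₗ[K] L →ₗ[K] L) (b : Module.Basis J K L) (c : K) : L →ₗ[K] EnvLeib K J L br b c :=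
  (RingQuot.mkAlgHom K (LeibRel K J L br b c)).toLinearMap ∘ₗ lHat K J L b

section InvariantSubalgebra

variable {A : Type*} [Ring A] [Algebra K A]

def invariantSubalgebra (q : A) (hq : q * q = q) : Subalgebra K A where
  carrier := {a | q * a * q = q * a}
  mul_mem' {a a'} (ha : q * a * q = q * a) (ha' : q * a' * q = q * a') := by
    calc q * (a * a') * q
        = q * a * q * (a' * q) := by rw [ha]; noncomm_ring
      _ = q * a * (q * a' * q) := by noncomm_ring
      _ = q * (a * a') := by rw [ha', ← mul_assoc, ha]; noncomm_ring
  add_mem' {a a'} (ha : q * a * q = q * a) (ha' : q * a' * q = q * a') := by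
    simp only [Set.mem_ofPred_eq, mul_add, add_mul, ha, ha']
  algebraMap_mem' r := by
    change q * (algebraMap K A r) * q = q * algebraMap K A r
    rw [← Algebra.commutes r q, mul_assoc, hq]

theorem mem_invariantSubalgebra {q : A} {hq : q * q = q} {a : A} :
    a ∈ invariantSubalgebra K q hq ↔ q * a * q = q * a :=
  Iff.rfl

end InvariantSubalgebra

namespace FreeInvAlg

variable {X : Type*}

/-- The basis vector `x̂_j` of `Â`. -/
def gen (j : X) : FreeInvAlg K X :=
  RingQuot.mkAlgHom K (InvRel K X) (TensorAlgebra.ι K (Finsupp.single (Sum.inl j) 1))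

theorem hom_ext {A : Type*} [Semiring A] [Algebra K A] {φ ψ : FreeInvAlg K X →ₐ[K] A}
    (hq : φ (qHat K X) = ψ (qHat K X)) (hgen : ∀ j, φ (gen K j) = ψ (gen K j)) : φ = ψ := by
  refine RingQuot.ringQuot_ext' K _ _ (TensorAlgebra.hom_ext (Finsupp.lhom_ext' fun a => ?_))
  refine LinearMap.ext_ring ?_
  rcases a with j | ⟨⟩
  · exact hgen j
  · exact hq

variable {A : Type*} [Ring A] [Algebra K A] (q : A) (hq : q * q = q) (g : X → A)
  (hg : ∀ j, q * g j * q = q * g j)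

def tensorLift : TensorAlgebra K (FreeInvModule K X) →ₐ[K] A :=
  TensorAlgebra.lift K (Finsupp.linearCombination K (Sum.elim g fun _ => q))

include hq hg in
theorem tensorLift_mem_invariantSubalgebra (t : TensorAlgebra K (FreeInvModule K X)) :
    tensorLift K q g t ∈ invariantSubalgebra K q hq := by
  suffices (tensorLift K q g).range ≤ invariantSubalgebra K q hq from this ⟨t, rfl⟩
  rw [tensorLift, TensorAlgebra.range_lift, Algebra.adjoin_le_iff, ← LinearMap.coe_range,
    Finsupp.range_linearCombination]
  refine Submodule.span_le (p := (invariantSubalgebra K q hq).toSubmodule).mpr ?_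
  rintro _ ⟨j | ⟨⟩, rfl⟩
  · exact hg j
  · simp only [Sum.elim_inr, SetLike.mem_coe, Subalgebra.mem_toSubmodule,
      mem_invariantSubalgebra, hq]

include hq hg in
theorem tensorLift_respects_invRel ⦃u v : TensorAlgebra K (FreeInvModule K X)⦄
    (h : InvRel K X u v) : tensorLift K q g u = tensorLift K q g v := by
  have hqt : tensorLift K q g (qTilde K X) = q := by
    simp [tensorLift, qTilde]
  rcases h with _ | a
  · rw [map_mul, hqt, hq]
  · rw [map_mul, map_mul, hqt]
    exact tensorLift_mem_invariantSubalgebra K q hq g hg a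

def lift : FreeInvAlg K X →ₐ[K] A :=
  RingQuot.liftAlgHom K ⟨tensorLift K q g, tensorLift_respects_invRel K q hq g hg⟩

@[simp]
theorem lift_qHat : lift K q hq g hg (qHat K X) = q := by
  simp [lift, qHat, qTilde, tensorLift]

@[simp]
theorem lift_gen (j : X) : lift K q hq g hg (gen K j) = g j := by
  simp [lift, gen, tensorLift]

end FreeInvAlg

section Leibniz

variable (J : Type*) (L : Type*) [AddCommGroup L] [Module K L] (b : Module.Basis J K L)

theorem lHat_basis (j : J) : lHat K J L b (b j) = FreeInvAlg.gen K j := by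
  simp [lHat, FreeInvAlg.gen]

theorem FreeInvAlg.lift_lHat {A : Type*} [Ring A] [Algebra K A] (q : A) (hq : q * q = q)
    (f : L →ₗ[K] A) (hfq : ∀ x, q * f x * q = q * f x) (x : L) :
    FreeInvAlg.lift K q hq (f ∘ b) (fun j => hfq (b j)) (lHat K J L b x) = f x := by
  change ((FreeInvAlg.lift K q hq (f ∘ b) _).toLinearMap ∘ₗ lHat K J L b) x = f x
  congr 1
  refine b.ext fun j => ?_
  simp [lHat_basis]

variable (br : L →ₗ[K] L →ₗ[K] L) (c : K)

theorem iLeib_bracket (x y : L) :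
    iLeib K J L br b c (br x y) =
      iLeib K J L br b c x * iLeib K J L br b c y
        - iLeib K J L br b c y * iLeib K J L br b c x
        + iLeib K J L br b c y * qBarLeib K J L br b c * iLeib K J L br b c x
        - iLeib K J L br b c x * iLeib K J L br b c y * qBarLeib K J L br b c
        + c • (iLeib K J L br b c x * qBarLeib K J L br b c * iLeib K J L br b c y)
        - c • (qBarLeib K J L br b c * iLeib K J L br b c y * iLeib K J L br b c x) := by
  simp only [iLeib, qBarLeib, LinearMap.comp_apply, AlgHom.toLinearMap_apply,
    RingQuot.mkAlgHom_rel K (LeibRel.rel x y), map_add, map_sub, map_mul, map_smul]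

namespace EnvLeib

theorem hom_ext {A : Type*} [Semiring A] [Algebra K A] {φ ψ : EnvLeib K J L br b c →ₐ[K] A}
    (hq : φ (qBarLeib K J L br b c) = ψ (qBarLeib K J L br b c))
    (hi : ∀ x, φ (iLeib K J L br b c x) = ψ (iLeib K J L br b c x)) : φ = ψ := by
  refine RingQuot.ringQuot_ext' K _ _ (FreeInvAlg.hom_ext K hq fun j => ?_)
  simpa [iLeib, lHat_basis] using hi (b j)

variable {A : Type*} [Ring A] [Algebra K A] (q : A) (hq : q * q = q) (f : L →ₗ[K] A)
  (hfq : ∀ x, q * f x * q = q * f x)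
  (hf : ∀ x y, f (br x y) = f x * f y - f y * f x + f y * q * f x - f x * f y * q
    + c • (f x * q * f y) - c • (q * f y * f x))

def lift : EnvLeib K J L br b c →ₐ[K] A :=
  RingQuot.liftAlgHom K ⟨FreeInvAlg.lift K q hq (f ∘ b) (fun j => hfq (b j)), by
    rintro _ _ ⟨x, y⟩
    simp only [map_add, map_sub, map_mul, map_smul, FreeInvAlg.lift_lHat, FreeInvAlg.lift_qHat]
    exact hf x y⟩

@[simp]
theorem lift_qBarLeib : lift K J L b br c q hq f hfq hf (qBarLeib K J L br b c) = q := by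
  simp [lift, qBarLeib]

@[simp]
theorem lift_iLeib (x : L) : lift K J L b br c q hq f hfq hf (iLeib K J L br b c x) = f x := by
  simp only [lift, iLeib, LinearMap.comp_apply, AlgHom.toLinearMap_apply,
    RingQuot.liftAlgHom_mkAlgHom_apply]
  exact FreeInvAlg.lift_lHat K J L b q hq f hfq x

end EnvLeib

end Leibniz

theorem envLeib_is_enveloping (J : Type*) (L : Type*) [AddCommGroup L] [Module K L]
    (br : L →ₗ[K] L →ₗ[K] L)
    (b : Module.Basis J K L) (c : K) :
    -- (i) `i` is a Leibniz algebra homomorphism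
    (∀ x y : L,
      iLeib K J L br b c (br x y) =
        iLeib K J L br b c x * iLeib K J L br b c y
          - iLeib K J L br b c y * iLeib K J L br b c x
          + iLeib K J L br b c y * qBarLeib K J L br b c * iLeib K J L br b c x
          - iLeib K J L br b c x * iLeib K J L br b c y * qBarLeib K J L br b c
          + c • (iLeib K J L br b c x * qBarLeib K J L br b c * iLeib K J L br b c y)
          - c • (qBarLeib K J L br b c * iLeib K J L br b c y * iLeib K J L br b c x)) ∧
    -- (ii) the universal property
    (∀ (A : Type*) [Ring A] [Algebra K A] (q : A), q * q = q →
      ∀ f : L →ₗ[K] A, (∀ x : L, q * f x * q = q * f x) →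
      (∀ x y : L,
        f (br x y) = f x * f y - f y * f x + f y * q * f x - f x * f y * q
          + c • (f x * q * f y) - c • (q * f y * f x)) →
      ∃! f' : EnvLeib K J L br b c →ₐ[K] A,
        (f' (qBarLeib K J L br b c) = q) ∧ (∀ x : L, f' (iLeib K J L br b c x) = f x)) := by
  refine ⟨iLeib_bracket K J L b br c, fun A _ _ q hq f hfq hf => ?_⟩
  refine ⟨EnvLeib.lift K J L b br c q hq f hfq hf, ⟨by simp, by simp⟩, ?_⟩
  rintro φ ⟨hφq, hφi⟩
  exact EnvLeib.hom_ext K J L b br c (by simp [hφq]) (by simp [hφi])
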